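/- Let N ≥ 3, let α ∈ (0, 2π), κ = π/α, and z ∈ ℝ^{N−2}. Write points of ℝ^N as x = (x₁, x₂, x″) with x″ ∈ ℝ^{N−2}, and let (ρ, θ) denote polar coordinates of (x₁, x₂), so the 2-dihedron of opening α is D_α = {x ∈ ℝ^N : ρ > 0, 0 < θ < α}, with edge d = {x₁ = x₂ = 0}. Then the function K(x) = ρ^κ sin(κθ) · (ρ² + |x″ − z|²)^{−(N−2+2κ)/2} is positive and harmonic in D_α, and it extends continuously by the value 0 to ∂D_α ∖ {(0,0,z)}. (Explicit form (6.19) of the Martin kernel of a 2-dihedron with pole at the edge point z, Section 6.2 with k = 2, κ₊ = π/α.) -/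

import Mathlib

open Filter

/-- The polar angle of `(x₁, x₂) ∈ ℝ² ∖ {0}`, normalized to lie in `[0, 2π)`. -/
noncomputable def theta (x₁ x₂ : ℝ) : ℝ :=
  if Complex.arg ((x₁ : ℂ) + x₂ * Complex.I) < 0 then
    Complex.arg ((x₁ : ℂ) + x₂ * Complex.I) + 2 * Real.pi
  else Complex.arg ((x₁ : ℂ) + x₂ * Complex.I)

/-- The 2-dihedron of opening `α`: `D_α = {ρ > 0, 0 < θ < α}` in
`ℝ^N = ℝ × ℝ × ℝ^{N-2}` with polar coordinates `(ρ, θ)` in the first two variables. -/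
def Dset (N : ℕ) (α : ℝ) : Set (ℝ × ℝ × EuclideanSpace ℝ (Fin (N - 2))) :=
  {x | 0 < Real.sqrt (x.1 ^ 2 + x.2.1 ^ 2) ∧
    0 < theta x.1 x.2.1 ∧ theta x.1 x.2.1 < α}

/-- The Laplacian on `ℝ × ℝ × ℝ^{N-2}`, as the sum of second derivatives in the
coordinate directions. -/
noncomputable def lapX (N : ℕ) (f : ℝ × ℝ × EuclideanSpace ℝ (Fin (N - 2)) → ℝ)
    (x : ℝ × ℝ × EuclideanSpace ℝ (Fin (N - 2))) : ℝ :=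
  fderiv ℝ (fun y => fderiv ℝ f y (1, 0, 0)) x (1, 0, 0) +
    fderiv ℝ (fun y => fderiv ℝ f y (0, 1, 0)) x (0, 1, 0) +
    ∑ i : Fin (N - 2),
      fderiv ℝ (fun y => fderiv ℝ f y (0, 0, EuclideanSpace.single i 1)) x
        (0, 0, EuclideanSpace.single i 1)

/-- The Martin kernel of the 2-dihedron with pole at the edge point `z`:
`K(x) = ρ^κ sin(κθ) (ρ² + |x″ - z|²)^{-(N-2+2κ)/2}`. -/
noncomputable def Kfun (N : ℕ) (κ : ℝ) (z : EuclideanSpace ℝ (Fin (N - 2)))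
    (x : ℝ × ℝ × EuclideanSpace ℝ (Fin (N - 2))) : ℝ :=
  Real.sqrt (x.1 ^ 2 + x.2.1 ^ 2) ^ κ * Real.sin (κ * theta x.1 x.2.1) *
    (x.1 ^ 2 + x.2.1 ^ 2 + ‖x.2.2 - z‖ ^ 2) ^ (-((N : ℝ) - 2 + 2 * κ) / 2)

/-! Near a point of `D_α` we have `ρ^κ sin(κθ) = Im (e^{iκπ} (-w)^κ)` with `w = x₁ + i x₂` and
the principal branch, so this factor `u` is the imaginary part of a holomorphic function of `w`:
it is killed by `∂₁² + ∂₂²`, and it satisfies Euler's identity `x₁ ∂₁u + x₂ ∂₂u = κ u`. Writing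
`K = u · t^p` with `t = |x - (0,0,z)|²`, the product and chain rules for second derivatives,
together with `Δt = 2N` and `|∇t|² = 4t`, give `ΔK = 2p (2p + N - 2 + 2κ) t^(p-1) u`, which
vanishes for `p = -(N - 2 + 2κ)/2`. At a boundary point other than the pole `t^p` stays bounded,
while `u → 0`: either `ρ → 0`, or the angle tends to `0` or to `α`, where `sin(κθ)` vanishes. -/

open Complex Topology

section SecondDirDeriv

variable {E F G : Type*} [NormedAddCommGroup E] [NormedSpace ℝ E]
  [NormedAddCommGroup F] [NormedSpace ℝ F] [NormedAddCommGroup G] [NormedSpace ℝ G]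
  {x v : E}

noncomputable def secondDirDeriv (f : E → F) (x v : E) : F :=
  fderiv ℝ (fun y => fderiv ℝ f y v) x v

theorem secondDirDeriv_clm (L : E →L[ℝ] F) (x v : E) : secondDirDeriv L x v = 0 := by
  simp [secondDirDeriv, L.fderiv]

theorem ContDiffAt.eventually_differentiableAt {f : E → F} (hf : ContDiffAt ℝ 2 f x) :
    ∀ᶠ y in 𝓝 x, DifferentiableAt ℝ f y :=
  (hf.eventually (by simp)).mono fun _ hy => hy.differentiableAt (by norm_num)

theorem ContDiffAt.differentiableAt_fderiv_apply {f : E → F} (hf : ContDiffAt ℝ 2 f x) (v : E) :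
    DifferentiableAt ℝ (fun y => fderiv ℝ f y v) x :=
  ((hf.fderiv_right (m := 1) (by norm_num)).differentiableAt (by norm_num)).clm_apply
    (differentiableAt_const v)

theorem secondDirDeriv_congr {f g : E → F} (h : f =ᶠ[𝓝 x] g) :
    secondDirDeriv f x v = secondDirDeriv g x v := by
  have hfd : (fun y => fderiv ℝ f y v) =ᶠ[𝓝 x] fun y => fderiv ℝ g y v :=
    (h.fderiv (𝕜 := ℝ)).mono fun y hy => by simp only [hy]
  unfold secondDirDeriv
  rw [hfd.fderiv_eq]

theorem secondDirDeriv_clm_comp (L : F →L[ℝ] G) {f : E → F} (hf : ContDiffAt ℝ 2 f x) :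
    secondDirDeriv (fun y => L (f y)) x v = L (secondDirDeriv f x v) := by
  have hfd : (fun y => fderiv ℝ (fun y => L (f y)) y v) =ᶠ[𝓝 x] fun y => L (fderiv ℝ f y v) :=
    hf.eventually_differentiableAt.mono fun y hy => by
      simp [fderiv_fun_comp y L.differentiableAt hy, L.fderiv]
  unfold secondDirDeriv
  rw [hfd.fderiv_eq, fderiv_fun_comp x L.differentiableAt (hf.differentiableAt_fderiv_apply v),
    L.fderiv]
  simp

theorem secondDirDeriv_mul {𝔸 : Type*} [NormedCommRing 𝔸] [NormedAlgebra ℝ 𝔸] {f g : E → 𝔸}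
    (hf : ContDiffAt ℝ 2 f x) (hg : ContDiffAt ℝ 2 g x) :
    secondDirDeriv (fun y => f y * g y) x v =
      f x * secondDirDeriv g x v + 2 * (fderiv ℝ f x v * fderiv ℝ g x v) +
        g x * secondDirDeriv f x v := by
  have hfd : (fun y => fderiv ℝ (fun y => f y * g y) y v) =ᶠ[𝓝 x]
      fun y => f y * fderiv ℝ g y v + g y * fderiv ℝ f y v := by
    filter_upwards [hf.eventually_differentiableAt, hg.eventually_differentiableAt]
      with y hfy hgy
    simp [fderiv_fun_mul hfy hgy]
  have H : HasFDerivAt (fun y => f y * fderiv ℝ g y v + g y * fderiv ℝ f y v) _ x :=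
    ((hf.differentiableAt (by norm_num)).hasFDerivAt.mul
      (hg.differentiableAt_fderiv_apply v).hasFDerivAt).add
    ((hg.differentiableAt (by norm_num)).hasFDerivAt.mul
      (hf.differentiableAt_fderiv_apply v).hasFDerivAt)
  unfold secondDirDeriv
  rw [hfd.fderiv_eq, H.fderiv]
  simp only [add_apply, FunLike.coe_smul, Pi.smul_apply, smul_eq_mul]
  ring

theorem secondDirDeriv_comp {𝕜 : Type*} [NontriviallyNormedField 𝕜] [NormedAlgebra ℝ 𝕜]
    {φ φ' : 𝕜 → 𝕜} {φ'' : 𝕜} {g : E → 𝕜} (hg : ContDiffAt ℝ 2 g x)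
    (hφ : ∀ᶠ w in 𝓝 (g x), HasDerivAt φ (φ' w) w) (hφ' : HasDerivAt φ' φ'' (g x)) :
    secondDirDeriv (fun y => φ (g y)) x v =
      φ'' * fderiv ℝ g x v ^ 2 + φ' (g x) * secondDirDeriv g x v := by
  have hfd : (fun y => fderiv ℝ (fun y => φ (g y)) y v) =ᶠ[𝓝 x]
      fun y => φ' (g y) * fderiv ℝ g y v := by
    filter_upwards [hg.continuousAt.tendsto.eventually hφ, hg.eventually_differentiableAt]
      with y hφy hgy
    have : HasFDerivAt (fun y => φ (g y)) _ y := hφy.comp_hasFDerivAt y hgy.hasFDerivAt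
    simp [this.fderiv]
  have hg1 := (hg.differentiableAt (by norm_num)).hasFDerivAt
  have H : HasFDerivAt (fun y => φ' (g y) * fderiv ℝ g y v) _ x :=
    (hφ'.comp_hasFDerivAt x hg1).mul (hg.differentiableAt_fderiv_apply v).hasFDerivAt
  unfold secondDirDeriv
  rw [hfd.fderiv_eq, H.fderiv]
  simp only [add_apply, FunLike.coe_smul, Pi.smul_apply, smul_eq_mul,
    Function.comp_apply]
  ring

end SecondDirDeriv

section PlaneCoord

variable {E : Type*} [NormedAddCommGroup E] [NormedSpace ℝ E]

variable (E) in
noncomputable def planeCoord : ℝ × ℝ × E →L[ℝ] ℂ :=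
  equivRealProdCLM.symm.toContinuousLinearMap.comp
    ((ContinuousLinearMap.fst ℝ ℝ (ℝ × E)).prod
      ((ContinuousLinearMap.fst ℝ ℝ E).comp (ContinuousLinearMap.snd ℝ ℝ (ℝ × E))))

@[simp]
theorem planeCoord_apply (y : ℝ × ℝ × E) : planeCoord E y = y.1 + y.2.1 * I := by
  simp [planeCoord, equivRealProdCLM_symm_apply]

end PlaneCoord

section PoleDistSq

variable {E : Type*} [NormedAddCommGroup E]

def poleDistSq (z : E) (y : ℝ × ℝ × E) : ℝ := y.1 ^ 2 + y.2.1 ^ 2 + ‖y.2.2 - z‖ ^ 2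

theorem poleDistSq_pos {z : E} {y : ℝ × ℝ × E} (hy : y ≠ (0, 0, z)) : 0 < poleDistSq z y := by
  unfold poleDistSq
  by_contra! h
  have h1 : y.1 = 0 := by nlinarith [sq_nonneg y.1, sq_nonneg y.2.1, sq_nonneg ‖y.2.2 - z‖]
  have h2 : y.2.1 = 0 := by nlinarith [sq_nonneg y.1, sq_nonneg y.2.1, sq_nonneg ‖y.2.2 - z‖]
  have h3 : ‖y.2.2 - z‖ ^ 2 = 0 := by
    nlinarith [sq_nonneg y.1, sq_nonneg y.2.1, sq_nonneg ‖y.2.2 - z‖]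
  exact hy (Prod.ext h1 (Prod.ext h2 (by simpa [sub_eq_zero] using h3)))

variable [InnerProductSpace ℝ E]

theorem contDiff_poleDistSq (z : E) {n : WithTop ℕ∞} : ContDiff ℝ n (poleDistSq z) :=
  ((contDiff_fst.pow 2).add ((contDiff_fst.comp contDiff_snd).pow 2)).add
    ((contDiff_norm_sq ℝ).comp ((contDiff_snd.comp contDiff_snd).sub contDiff_const))

theorem fderiv_poleDistSq_apply (z : E) (y v : ℝ × ℝ × E) :
    fderiv ℝ (poleDistSq z) y v =
      2 * (y.1 * v.1 + y.2.1 * v.2.1 + inner ℝ (y.2.2 - z) v.2.2) := by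
  have H : HasFDerivAt (poleDistSq z) _ y :=
    ((hasFDerivAt_fst.pow 2).add ((hasFDerivAt_fst.comp y hasFDerivAt_snd).pow 2)).add
      ((hasFDerivAt_snd.comp y hasFDerivAt_snd).sub_const z).norm_sq
  rw [H.fderiv]
  simp only [Nat.add_one_sub_one, pow_one, nsmul_eq_mul, Nat.cast_ofNat, Function.comp_apply,
    map_sub, ContinuousLinearMap.sub_comp, add_apply, smul_apply, ContinuousLinearMap.coe_fst',
    smul_eq_mul, ContinuousLinearMap.comp_apply, ContinuousLinearMap.coe_snd', sub_apply,
    coe_innerSL_apply, inner_sub_left]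
  ring

theorem secondDirDeriv_poleDistSq (z : E) (x v : ℝ × ℝ × E) :
    secondDirDeriv (poleDistSq z) x v = 2 * (v.1 ^ 2 + v.2.1 ^ 2 + ‖v.2.2‖ ^ 2) := by
  have hfd : (fun y => fderiv ℝ (poleDistSq z) y v) =
      fun y => 2 * (y.1 * v.1 + y.2.1 * v.2.1 + inner ℝ v.2.2 (y.2.2 - z)) := by
    funext y; rw [fderiv_poleDistSq_apply, real_inner_comm]
  have h1 : HasFDerivAt (𝕜 := ℝ) (fun y : ℝ × ℝ × E => y.1) _ x := hasFDerivAt_fst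
  have h2 : HasFDerivAt (𝕜 := ℝ) (fun y : ℝ × ℝ × E => y.2.1) _ x :=
    hasFDerivAt_fst.comp x hasFDerivAt_snd
  have H : HasFDerivAt
      (fun y => 2 * (y.1 * v.1 + y.2.1 * v.2.1 + inner ℝ v.2.2 (y.2.2 - z))) _ x :=
    (((h1.mul_const v.1).add (h2.mul_const v.2.1)).add
      ((innerSL ℝ v.2.2).hasFDerivAt.comp x
        ((hasFDerivAt_snd.comp x hasFDerivAt_snd).sub_const z))).const_mul 2
  rw [secondDirDeriv, hfd, H.fderiv]
  simp only [smul_add, add_apply, smul_apply, ContinuousLinearMap.coe_fst', smul_eq_mul,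
    ContinuousLinearMap.comp_apply, ContinuousLinearMap.coe_snd', coe_innerSL_apply,
    real_inner_self_eq_norm_sq]
  ring

end PoleDistSq

section Angle

variable {w : ℂ}

theorem theta_eq_arg (w : ℂ) :
    theta w.re w.im = if arg w < 0 then arg w + 2 * Real.pi else arg w := by
  simp [theta, re_add_im]

theorem theta_eq_pi_add_arg_neg (h : -w ∈ slitPlane) :
    theta w.re w.im = Real.pi + arg (-w) := by
  rw [theta_eq_arg]
  rcases lt_trichotomy w.im 0 with him | him | him
  · rw [if_pos (arg_neg_iff.mpr him), arg_neg_eq_arg_add_pi_of_im_neg him]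
    ring
  · have hre : w.re < 0 := by simpa [slitPlane, him] using h
    rw [if_neg (by rw [arg_eq_pi_iff.mpr ⟨hre, him⟩]; exact not_lt.mpr Real.pi_pos.le),
      arg_eq_pi_iff.mpr ⟨hre, him⟩, arg_eq_zero_iff.mpr ⟨by simp [hre.le], by simp [him]⟩]
    ring
  · rw [if_neg (not_lt.mpr (arg_nonneg_iff.mpr him.le)), arg_neg_eq_arg_sub_pi_of_im_pos him]
    ring

theorem neg_mem_slitPlane_of_theta_pos (h : 0 < theta w.re w.im) : -w ∈ slitPlane := by
  by_contra hc
  have : arg w = 0 := arg_eq_zero_iff.mpr (by simpa [slitPlane, not_or] using hc)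
  rw [theta_eq_arg, this] at h
  simp at h

theorem continuousAt_theta (h : -w ∈ slitPlane) :
    ContinuousAt (fun w : ℂ => theta w.re w.im) w := by
  have hc : ContinuousAt (fun w : ℂ => Real.pi + arg (-w)) w :=
    continuousAt_const.add ((continuousAt_arg h).comp continuousAt_neg)
  refine hc.congr ?_
  filter_upwards [(isOpen_slitPlane.preimage continuous_neg).mem_nhds h] with v hv
  exact (theta_eq_pi_add_arg_neg hv).symm

end Angle

section SectorPow

noncomputable def sectorPow (κ : ℝ) (w : ℂ) : ℂ := exp (κ * Real.pi * I) * (-w) ^ (κ : ℂ)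

variable {κ : ℝ} {w : ℂ}

theorem analyticAt_sectorPow (hw : -w ∈ slitPlane) : AnalyticAt ℂ (sectorPow κ) w :=
  analyticAt_const.mul ((analyticAt_id.neg).cpow analyticAt_const hw)

theorem im_sectorPow (hw : -w ∈ slitPlane) :
    (sectorPow κ w).im = ‖w‖ ^ κ * Real.sin (κ * theta w.re w.im) := by
  have hw0 : -w ≠ 0 := slitPlane_ne_zero hw
  rw [sectorPow, cpow_def_of_ne_zero hw0, ← Complex.exp_add, exp_im, theta_eq_pi_add_arg_neg hw]
  have hre : (κ * Real.pi * I + log (-w) * κ : ℂ).re = Real.log ‖w‖ * κ := by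
    simp [log_re]
  have him : (κ * Real.pi * I + log (-w) * κ : ℂ).im = κ * (Real.pi + arg (-w)) := by
    simp only [add_im, mul_im, mul_re, ofReal_re, ofReal_im, mul_zero, sub_zero, I_im, mul_one,
      zero_mul, add_zero, I_re, log_im, zero_add]
    ring
  rw [hre, him, ← Real.rpow_def_of_pos (norm_pos_iff.mpr (neg_ne_zero.mp hw0))]

theorem deriv_sectorPow_mul_self (hw : -w ∈ slitPlane) :
    deriv (sectorPow κ) w * w = κ * sectorPow κ w := by
  have hw0 : -w ≠ 0 := slitPlane_ne_zero hw
  have H : HasDerivAt (sectorPow κ)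
      (exp (κ * Real.pi * I) * (κ * (-w) ^ ((κ : ℂ) - 1) * -1)) w :=
    ((hasDerivAt_id w).neg.cpow_const hw).const_mul _
  have hpow : (-w) ^ (κ : ℂ) = (-w) ^ ((κ : ℂ) - 1) * (-w) := by
    conv_lhs => rw [← sub_add_cancel (κ : ℂ) 1, cpow_add _ _ hw0, cpow_one]
  rw [H.deriv, sectorPow, hpow]
  ring

end SectorPow

section HolomorphicComp

variable {E : Type*} [NormedAddCommGroup E] [NormedSpace ℝ E] {h : ℂ → ℂ} {L : E →L[ℝ] ℂ}
  {x : E}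

theorem AnalyticAt.contDiffAt_comp_clm (hh : AnalyticAt ℂ h (L x)) :
    ContDiffAt ℝ 2 (fun y => h (L y)) x :=
  (hh.contDiffAt.restrict_scalars ℝ).comp x L.contDiff.contDiffAt

theorem AnalyticAt.fderiv_comp_clm_apply (hh : AnalyticAt ℂ h (L x)) (v : E) :
    fderiv ℝ (fun y => h (L y)) x v = deriv h (L x) * L v := by
  have H : HasFDerivAt (fun y => h (L y)) _ x :=
    hh.differentiableAt.hasDerivAt.comp_hasFDerivAt x L.hasFDerivAt
  simp [H.fderiv]

theorem AnalyticAt.secondDirDeriv_comp_clm (hh : AnalyticAt ℂ h (L x)) (v : E) :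
    secondDirDeriv (fun y => h (L y)) x v = deriv (deriv h) (L x) * L v ^ 2 := by
  rw [secondDirDeriv_comp L.contDiff.contDiffAt
    (hh.eventually_analyticAt.mono fun w hw => hw.differentiableAt.hasDerivAt)
    hh.deriv.differentiableAt.hasDerivAt, secondDirDeriv_clm, mul_zero, add_zero]
  simp [L.fderiv]

end HolomorphicComp

section SectorHarmonic

variable {E : Type*} [NormedAddCommGroup E] [NormedSpace ℝ E] {κ : ℝ} {x : ℝ × ℝ × E}

noncomputable def sectorHarmonic (κ : ℝ) (y : ℝ × ℝ × E) : ℝ :=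
  Real.sqrt (y.1 ^ 2 + y.2.1 ^ 2) ^ κ * Real.sin (κ * theta y.1 y.2.1)

theorem sectorHarmonic_eq (y : ℝ × ℝ × E) :
    sectorHarmonic κ y =
      ‖planeCoord E y‖ ^ κ * Real.sin (κ * theta (planeCoord E y).re (planeCoord E y).im) := by
  simp [sectorHarmonic, norm_add_mul_I]

theorem sectorHarmonic_eventuallyEq (hx : -planeCoord E x ∈ slitPlane) :
    sectorHarmonic κ =ᶠ[𝓝 x] fun y => (sectorPow κ (planeCoord E y)).im := by
  filter_upwards [((isOpen_slitPlane.preimage continuous_neg).preimage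
    (planeCoord E).continuous).mem_nhds hx] with y hy
  rw [sectorHarmonic_eq, im_sectorPow hy]

theorem contDiffAt_sectorHarmonic (hx : -planeCoord E x ∈ slitPlane) :
    ContDiffAt ℝ 2 (sectorHarmonic κ) x :=
  (imCLM.contDiff.contDiffAt.comp x
    (analyticAt_sectorPow (κ := κ) hx).contDiffAt_comp_clm).congr_of_eventuallyEq
    (sectorHarmonic_eventuallyEq hx)

theorem fderiv_sectorHarmonic_apply (hx : -planeCoord E x ∈ slitPlane) (v : ℝ × ℝ × E) :
    fderiv ℝ (sectorHarmonic κ) x v =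
      (deriv (sectorPow κ) (planeCoord E x) * planeCoord E v).im := by
  have hh := analyticAt_sectorPow (κ := κ) hx
  have H : HasFDerivAt (fun y => (sectorPow κ (planeCoord E y)).im) _ x :=
    imCLM.hasFDerivAt.comp x (hh.contDiffAt_comp_clm.differentiableAt (by norm_num)).hasFDerivAt
  rw [(sectorHarmonic_eventuallyEq hx).fderiv_eq, H.fderiv, ContinuousLinearMap.comp_apply,
    hh.fderiv_comp_clm_apply, imCLM_apply]

theorem secondDirDeriv_sectorHarmonic (hx : -planeCoord E x ∈ slitPlane) (v : ℝ × ℝ × E) :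
    secondDirDeriv (sectorHarmonic κ) x v =
      (deriv (deriv (sectorPow κ)) (planeCoord E x) * planeCoord E v ^ 2).im := by
  have hh := analyticAt_sectorPow (κ := κ) hx
  rw [secondDirDeriv_congr (sectorHarmonic_eventuallyEq hx),
    ← hh.secondDirDeriv_comp_clm]
  exact secondDirDeriv_clm_comp imCLM hh.contDiffAt_comp_clm

theorem sectorHarmonic_euler (hx : -planeCoord E x ∈ slitPlane) :
    x.1 * fderiv ℝ (sectorHarmonic κ) x (1, 0, 0) +
      x.2.1 * fderiv ℝ (sectorHarmonic κ) x (0, 1, 0) = κ * sectorHarmonic κ x := by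
  have := congrArg im (deriv_sectorPow_mul_self (κ := κ) hx)
  rw [mul_im, im_ofReal_mul] at this
  rw [fderiv_sectorHarmonic_apply hx, fderiv_sectorHarmonic_apply hx,
    (sectorHarmonic_eventuallyEq hx).eq_of_nhds, ← this]
  simp only [planeCoord_apply, ofReal_one, ofReal_zero, zero_mul, add_zero, mul_one, one_mul,
    zero_add, mul_im, I_im, I_re, mul_zero, add_im, ofReal_im, ofReal_re, add_re, mul_re, sub_self]
  ring

end SectorHarmonic

section RpowConst

variable {E : Type*} [NormedAddCommGroup E] [NormedSpace ℝ E] {g : E → ℝ} {x : E}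

theorem fderiv_rpow_const_apply (hg : DifferentiableAt ℝ g x) (hgx : g x ≠ 0) (p : ℝ) (v : E) :
    fderiv ℝ (fun y => g y ^ p) x v = p * g x ^ (p - 1) * fderiv ℝ g x v := by
  rw [(hg.hasFDerivAt.rpow_const (p := p) (Or.inl hgx)).fderiv]
  simp

theorem secondDirDeriv_rpow_const (hg : ContDiffAt ℝ 2 g x) (hgx : g x ≠ 0) (p : ℝ) (v : E) :
    secondDirDeriv (fun y => g y ^ p) x v =
      p * (p - 1) * g x ^ (p - 2) * fderiv ℝ g x v ^ 2 +
        p * g x ^ (p - 1) * secondDirDeriv g x v := by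
  have hφ' : HasDerivAt (fun s : ℝ => p * s ^ (p - 1)) (p * (p - 1) * g x ^ (p - 2)) (g x) := by
    have := (Real.hasDerivAt_rpow_const (p := p - 1) (Or.inl hgx)).const_mul p
    rwa [sub_sub, one_add_one_eq_two, ← mul_assoc] at this
  exact secondDirDeriv_comp hg
    ((eventually_ne_nhds hgx).mono fun s hs => Real.hasDerivAt_rpow_const (Or.inl hs)) hφ'

end RpowConst

section SectorHarmonicMulRpow

variable {E : Type*} [NormedAddCommGroup E] [InnerProductSpace ℝ E] {κ p : ℝ} {z : E}
  {x : ℝ × ℝ × E}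

theorem secondDirDeriv_sectorHarmonic_mul_rpow (hx : -planeCoord E x ∈ slitPlane)
    (ht : 0 < poleDistSq z x) (v : ℝ × ℝ × E) :
    secondDirDeriv (fun y => sectorHarmonic κ y * poleDistSq z y ^ p) x v =
      sectorHarmonic κ x * (p * (p - 1) * poleDistSq z x ^ (p - 2) *
          fderiv ℝ (poleDistSq z) x v ^ 2 + p * poleDistSq z x ^ (p - 1) *
          secondDirDeriv (poleDistSq z) x v) +
        2 * (fderiv ℝ (sectorHarmonic κ) x v *
          (p * poleDistSq z x ^ (p - 1) * fderiv ℝ (poleDistSq z) x v)) +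
        poleDistSq z x ^ p * secondDirDeriv (sectorHarmonic κ) x v := by
  have htd : ContDiffAt ℝ 2 (poleDistSq z) x := (contDiff_poleDistSq z).contDiffAt
  rw [secondDirDeriv_mul (contDiffAt_sectorHarmonic hx) (htd.rpow_const_of_ne ht.ne'),
    secondDirDeriv_rpow_const htd ht.ne',
    fderiv_rpow_const_apply (htd.differentiableAt (by norm_num)) ht.ne']

end SectorHarmonicMulRpow

theorem lapX_eq_sum_secondDirDeriv (N : ℕ) (f : ℝ × ℝ × EuclideanSpace ℝ (Fin (N - 2)) → ℝ)
    (x : ℝ × ℝ × EuclideanSpace ℝ (Fin (N - 2))) :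
    lapX N f x = secondDirDeriv f x (1, 0, 0) + secondDirDeriv f x (0, 1, 0) +
      ∑ i, secondDirDeriv f x (0, 0, EuclideanSpace.single i 1) := rfl

theorem lapX_sectorHarmonic_mul_rpow {N : ℕ} (hN : 2 ≤ N) (κ p : ℝ)
    {z : EuclideanSpace ℝ (Fin (N - 2))} {x : ℝ × ℝ × EuclideanSpace ℝ (Fin (N - 2))}
    (hx : -planeCoord _ x ∈ slitPlane) (ht : 0 < poleDistSq z x) :
    lapX N (fun y => sectorHarmonic κ y * poleDistSq z y ^ p) x =
      2 * p * (2 * p + N - 2 + 2 * κ) * poleDistSq z x ^ (p - 1) * sectorHarmonic κ x := by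
  have hEuler := sectorHarmonic_euler (κ := κ) hx
  simp only [fderiv_sectorHarmonic_apply hx, planeCoord_apply, ofReal_one, ofReal_zero, zero_mul,
    add_zero, mul_one, one_mul, zero_add, mul_im, I_im, I_re, mul_zero] at hEuler
  set u := sectorHarmonic κ x
  set t := poleDistSq z x
  have ht_def : t = x.1 ^ 2 + x.2.1 ^ 2 + ‖x.2.2 - z‖ ^ 2 := rfl
  have hrpow : t ^ (p - 1) = t ^ (p - 2) * t := by
    rw [← Real.rpow_add_one ht.ne']; ring_nf
  have hsum : ∑ i : Fin (N - 2), u * (p * (p - 1) * t ^ (p - 2) * (2 * (x.2.2 i - z i)) ^ 2 +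
      p * t ^ (p - 1) * 2) =
      u * (4 * p * (p - 1) * t ^ (p - 2) * ‖x.2.2 - z‖ ^ 2 + (N - 2) * (2 * p * t ^ (p - 1))) := by
    have hN' : ((N - 2 : ℕ) : ℝ) = N - 2 := by rw [Nat.cast_sub hN]; norm_num
    calc _ = ∑ i : Fin (N - 2), (u * (4 * p * (p - 1) * t ^ (p - 2)) * (x.2.2 - z) i ^ 2 +
          u * (2 * p * t ^ (p - 1))) :=
          Finset.sum_congr rfl fun i _ => by simp only [PiLp.sub_apply]; ring
      _ = _ := by
        rw [Finset.sum_add_distrib, ← Finset.mul_sum, Finset.sum_const, Finset.card_univ,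
          Fintype.card_fin, nsmul_eq_mul, hN', EuclideanSpace.real_norm_sq_eq]
        ring
  rw [lapX_eq_sum_secondDirDeriv, secondDirDeriv_sectorHarmonic_mul_rpow hx ht,
    secondDirDeriv_sectorHarmonic_mul_rpow hx ht,
    Finset.sum_congr rfl fun i _ => secondDirDeriv_sectorHarmonic_mul_rpow hx ht _]
  simp only [fderiv_poleDistSq_apply, secondDirDeriv_poleDistSq, fderiv_sectorHarmonic_apply hx,
    secondDirDeriv_sectorHarmonic hx, EuclideanSpace.inner_single_right, PiLp.sub_apply,
    PiLp.norm_single, planeCoord_apply, ofReal_one, ofReal_zero, mul_one, mul_zero, add_zero,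
    zero_add, zero_mul, one_mul, one_pow, inner_zero_right, norm_zero, norm_one, ne_eq,
    OfNat.ofNat_ne_zero, not_false_eq_true, zero_pow, mul_im, I_im, I_re, I_sq, mul_neg, neg_im,
    Real.ringHom_apply, zero_im]
  rw [hsum, hrpow]
  linear_combination (4 * p * t ^ (p - 2) * t) * hEuler -
    (4 * u * p * (p - 1) * t ^ (p - 2)) * ht_def

section Sector

def sector (α : ℝ) : Set ℂ := {w | theta w.re w.im ∈ Set.Ioo 0 α}

variable {α : ℝ}

theorem ne_zero_of_mem_sector {w : ℂ} (hw : w ∈ sector α) : w ≠ 0 :=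
  neg_ne_zero.mp (slitPlane_ne_zero (neg_mem_slitPlane_of_theta_pos hw.1))

theorem isOpen_sector (α : ℝ) : IsOpen (sector α) := by
  have hS : sector α = {w : ℂ | -w ∈ slitPlane} ∩ (fun w : ℂ => theta w.re w.im) ⁻¹' Set.Ioo 0 α :=
    Set.ext fun w => ⟨fun hw => ⟨neg_mem_slitPlane_of_theta_pos hw.1, hw⟩, fun hw => hw.2⟩
  rw [hS]
  exact ContinuousOn.isOpen_inter_preimage (fun w hw => (continuousAt_theta hw).continuousWithinAt)
    (isOpen_slitPlane.preimage continuous_neg) isOpen_Ioo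

theorem Dset_eq_preimage_sector (N : ℕ) (α : ℝ) :
    Dset N α = planeCoord (EuclideanSpace ℝ (Fin (N - 2))) ⁻¹' sector α := by
  ext y
  have hw : planeCoord _ y ∈ sector α ↔ 0 < theta y.1 y.2.1 ∧ theta y.1 y.2.1 < α := by
    simp [sector]
  rw [Set.mem_preimage, hw, Dset, Set.mem_ofPred_eq, and_iff_right_of_imp]
  intro h
  rw [← norm_add_mul_I, norm_pos_iff]
  simpa using ne_zero_of_mem_sector (hw.mpr h)

theorem mem_Dset_iff {N : ℕ} {x : ℝ × ℝ × EuclideanSpace ℝ (Fin (N - 2))} :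
    x ∈ Dset N α ↔ planeCoord _ x ∈ sector α := by
  rw [Dset_eq_preimage_sector, Set.mem_preimage]

theorem sectorHarmonic_pos {E : Type*} [NormedAddCommGroup E] [NormedSpace ℝ E] {κ : ℝ}
    (hκ : 0 < κ) (hκα : κ * α = Real.pi) {y : ℝ × ℝ × E} (hy : planeCoord E y ∈ sector α) :
    0 < sectorHarmonic κ y := by
  rw [sectorHarmonic_eq]
  refine mul_pos (Real.rpow_pos_of_pos (norm_pos_iff.mpr (ne_zero_of_mem_sector hy)) _)
    (Real.sin_pos_of_pos_of_lt_pi (mul_pos hκ hy.1) ?_)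
  rw [← hκα]
  exact mul_lt_mul_of_pos_left hy.2 hκ

theorem tendsto_theta_of_mem_frontier_sector (hα : α < 2 * Real.pi) {w₀ : ℂ}
    (hw : w₀ ∈ frontier (sector α)) (hw0 : w₀ ≠ 0) :
    Tendsto (fun w : ℂ => theta w.re w.im) (𝓝[sector α] w₀) (𝓝 α) ∨
      Tendsto (fun w : ℂ => theta w.re w.im) (𝓝[sector α] w₀) (𝓝 0) := by
  rw [(isOpen_sector α).frontier_eq] at hw
  obtain ⟨hcl, hnot⟩ := hw
  by_cases hslit : -w₀ ∈ slitPlane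
  · left
    have hθ := (continuousAt_theta hslit).continuousWithinAt (s := sector α)
    have := mem_closure_iff_nhdsWithin_neBot.mp hcl
    have hle : theta w₀.re w₀.im ≤ α :=
      le_of_tendsto hθ (eventually_nhdsWithin_of_forall fun w hw => hw.2.le)
    have hpos : 0 < theta w₀.re w₀.im := by
      rw [theta_eq_pi_add_arg_neg hslit]; linarith [neg_pi_lt_arg (-w₀)]
    have hα : theta w₀.re w₀.im = α :=
      hle.eq_or_lt.resolve_right fun hlt => hnot ⟨hpos, hlt⟩
    exact hα ▸ hθ.tendsto
  · right
    have hre : 0 ≤ w₀.re ∧ w₀.im = 0 := by simpa [slitPlane, not_or] using hslit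
    have hw₀ : w₀ ∈ slitPlane := Or.inl (hre.1.lt_of_ne fun h => hw0 (Complex.ext h.symm hre.2))
    have harg : Tendsto arg (𝓝[sector α] w₀) (𝓝 0) := by
      rw [← arg_eq_zero_iff.mpr hre]
      exact (continuousAt_arg hw₀).continuousWithinAt.tendsto
    refine harg.congr' ?_
    -- Near the positive real axis `theta` is close to `0` or to `2π`, and `theta < α < 2π`.
    filter_upwards [harg.eventually (eventually_abs_sub_lt 0 (by linarith : 0 < 2 * Real.pi - α)),
      self_mem_nhdsWithin] with w hsmall hw
    have hθ := hw.2
    rw [theta_eq_arg] at hθ ⊢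
    split_ifs at hθ ⊢ with hneg
    · rw [sub_zero, abs_lt] at hsmall; linarith
    · rfl

end Sector

section Boundary

variable {κ α : ℝ}

theorem tendsto_norm_rpow_mul_sin_of_mem_frontier_sector (hκ : 0 < κ) (hκα : κ * α = Real.pi)
    (hα : α < 2 * Real.pi) {w₀ : ℂ} (hw : w₀ ∈ frontier (sector α)) :
    Tendsto (fun w : ℂ => ‖w‖ ^ κ * Real.sin (κ * theta w.re w.im)) (𝓝[sector α] w₀) (𝓝 0) := by
  have hnorm : Tendsto (fun w : ℂ => ‖w‖ ^ κ) (𝓝[sector α] w₀) (𝓝 (‖w₀‖ ^ κ)) :=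
    ((continuous_norm.rpow_const fun _ => Or.inr hκ.le).tendsto w₀).mono_left
      nhdsWithin_le_nhds
  rcases eq_or_ne w₀ 0 with rfl | hw0
  · rw [norm_zero, Real.zero_rpow hκ.ne'] at hnorm
    refine squeeze_zero_norm (fun w => ?_) hnorm
    rw [norm_mul, Real.norm_of_nonneg (by positivity)]
    exact mul_le_of_le_one_right (by positivity) (Real.abs_sin_le_one _)
  · have hsin : Tendsto (fun w : ℂ => Real.sin (κ * theta w.re w.im)) (𝓝[sector α] w₀) (𝓝 0) := by
      rcases tendsto_theta_of_mem_frontier_sector hα hw hw0 with h | h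
      · have := (Real.continuous_sin.tendsto _).comp (h.const_mul κ)
        rwa [hκα, Real.sin_pi] at this
      · have := (Real.continuous_sin.tendsto _).comp (h.const_mul κ)
        rwa [mul_zero, Real.sin_zero] at this
    simpa using hnorm.mul hsin

theorem tendsto_sectorHarmonic_of_mem_frontier (hκ : 0 < κ) (hκα : κ * α = Real.pi)
    (hα : α < 2 * Real.pi) {N : ℕ} {x : ℝ × ℝ × EuclideanSpace ℝ (Fin (N - 2))}
    (hx : x ∈ frontier (Dset N α)) :
    Tendsto (sectorHarmonic κ) (𝓝[Dset N α] x) (𝓝 0) := by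
  set J := planeCoord (EuclideanSpace ℝ (Fin (N - 2)))
  rw [Dset_eq_preimage_sector] at hx ⊢
  have hJ : Tendsto J (𝓝[J ⁻¹' sector α] x) (𝓝[sector α] (J x)) :=
    J.continuous.continuousWithinAt.tendsto_nhdsWithin (Set.mapsTo_preimage J _)
  have := (tendsto_norm_rpow_mul_sin_of_mem_frontier_sector hκ hκα hα
    (J.continuous.frontier_preimage_subset _ hx)).comp hJ
  exact this.congr fun y => (sectorHarmonic_eq y).symm

end Boundary

/-- Explicit form (6.19) of the Martin kernel of a 2-dihedron with pole at the edge point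
`z` (Section 6.2 with `k = 2`, `κ₊ = π/α`): `K` is positive and harmonic in `D_α` and
extends continuously by `0` to `∂D_α ∖ {(0,0,z)}`. -/
theorem statement17 (N : ℕ) (hN : 3 ≤ N) (α : ℝ) (hα0 : 0 < α)
    (hα2 : α < 2 * Real.pi) (z : EuclideanSpace ℝ (Fin (N - 2))) :
    (∀ x ∈ Dset N α, 0 < Kfun N (Real.pi / α) z x) ∧
    (∀ x ∈ Dset N α, lapX N (Kfun N (Real.pi / α) z) x = 0) ∧
    ∀ x ∈ frontier (Dset N α), x ≠ ((0 : ℝ), (0 : ℝ), z) →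
      Tendsto (Kfun N (Real.pi / α) z) (nhdsWithin x (Dset N α)) (nhds 0) := by
  set κ := Real.pi / α
  have hκ : 0 < κ := div_pos Real.pi_pos hα0
  have hκα : κ * α = Real.pi := div_mul_cancel₀ _ hα0.ne'
  have hK : Kfun N κ z =
      fun y => sectorHarmonic κ y * poleDistSq z y ^ (-((N : ℝ) - 2 + 2 * κ) / 2) := rfl
  have hpole : ∀ x ∈ Dset N α, 0 < poleDistSq z x := fun x hx =>
    poleDistSq_pos fun h => ne_zero_of_mem_sector (mem_Dset_iff.mp hx) (by simp [h])
  refine ⟨fun x hx => ?_, fun x hx => ?_, fun x hx hxz => ?_⟩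
  · rw [hK]
    exact mul_pos (sectorHarmonic_pos hκ hκα (mem_Dset_iff.mp hx))
      (Real.rpow_pos_of_pos (hpole x hx) _)
  · rw [hK, lapX_sectorHarmonic_mul_rpow (by omega) κ _
      (neg_mem_slitPlane_of_theta_pos (mem_Dset_iff.mp hx).1) (hpole x hx)]
    ring
  · have hT : ContinuousAt (fun y => poleDistSq z y ^ (-((N : ℝ) - 2 + 2 * κ) / 2)) x :=
      (contDiff_poleDistSq z (n := 0)).continuous.continuousAt.rpow_const
        (Or.inl (poleDistSq_pos hxz).ne')
    rw [hK]
    simpa using (tendsto_sectorHarmonic_of_mem_frontier hκ hκα hα2 hx).mul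
      hT.continuousWithinAt.tendsto
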